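/- Let ABC be a triangle with position vectors A,B,C and let α,β,γ ∈ ℝ. Define A1 = B + α(C-B), B1 = C + β(A-C), C1 = A + γ(B-A), and A2 = B + (1-α)(C-B), B2 = C + (1-β)(A-C), C2 = A + (1-γ)(B-A). Then triangles A1B1C1 and A2B2C2 have equal (unsigned) area; indeed both areas equal |1 - γ(1-β) - α(1-γ) - β(1-α)| times the area of ABC. -/
import Mathlib


/-- Unsigned area of the triangle `PQR` in the plane. -/
noncomputable def triArea (P Q R : EuclideanSpace ℝ (Fin 2)) : ℝ :=
  |(Q 0 - P 0) * (R 1 - P 1) - (Q 1 - P 1) * (R 0 - P 0)| / 2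

/-- the two triangles built from points with parameters
`α, β, γ` and `1-α, 1-β, 1-γ` on the sides have equal area, namely
`|1 - γ(1-β) - α(1-γ) - β(1-α)|` times the area of `ABC`. -/
theorem stmt12 (A B C : EuclideanSpace ℝ (Fin 2)) (α β γ : ℝ)
    (A1 B1 C1 A2 B2 C2 : EuclideanSpace ℝ (Fin 2))
    (hA1 : A1 = B + α • (C - B))
    (hB1 : B1 = C + β • (A - C))
    (hC1 : C1 = A + γ • (B - A))
    (hA2 : A2 = B + (1 - α) • (C - B))
    (hB2 : B2 = C + (1 - β) • (A - C))
    (hC2 : C2 = A + (1 - γ) • (B - A)) :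
    triArea A1 B1 C1 = triArea A2 B2 C2 ∧
    triArea A1 B1 C1 =
      |1 - γ * (1 - β) - α * (1 - γ) - β * (1 - α)| * triArea A B C := by
  subst hA1 hB1 hC1 hA2 hB2 hC2
  simp only [triArea, PiLp.add_apply, PiLp.smul_apply, PiLp.sub_apply, smul_eq_mul]
  set k := 1 - γ * (1 - β) - α * (1 - γ) - β * (1 - α) with hk
  set D := (B 0 - A 0) * (C 1 - A 1) - (B 1 - A 1) * (C 0 - A 0) with hD
  have h1 : (C 0 + β * (A 0 - C 0) - (B 0 + α * (C 0 - B 0))) *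
        (A 1 + γ * (B 1 - A 1) - (B 1 + α * (C 1 - B 1))) -
      (C 1 + β * (A 1 - C 1) - (B 1 + α * (C 1 - B 1))) *
        (A 0 + γ * (B 0 - A 0) - (B 0 + α * (C 0 - B 0))) = k * D := by
    rw [hk, hD]; ring
  have h2 : (C 0 + (1 - β) * (A 0 - C 0) - (B 0 + (1 - α) * (C 0 - B 0))) *
        (A 1 + (1 - γ) * (B 1 - A 1) - (B 1 + (1 - α) * (C 1 - B 1))) -
      (C 1 + (1 - β) * (A 1 - C 1) - (B 1 + (1 - α) * (C 1 - B 1))) *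
        (A 0 + (1 - γ) * (B 0 - A 0) - (B 0 + (1 - α) * (C 0 - B 0))) = k * D := by
    rw [hk, hD]; ring
  rw [h1, h2, abs_mul]
  exact ⟨rfl, by ring⟩
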